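/- Let n ≥ 4 be even and let P_n be the path graph on vertices 1,…,n with edges {i,i+1}. Then Σ_{σ ∈ Aut(P_n)} Σ_{μ matching of P_n with σ(μ)=μ} w^μ(σ) = a_1^n·U_n(b_1,β_1) + a_2^{n/2}·(γ_1·U_{n/2}(b_2,β_2) + c_1·β_2·U_{(n−2)/2}(b_2,β_2)), where U_m(Y,Z) evaluated at ring elements Y, Z denotes Σ_{μ matching of P_m} Y^{|μ|} Z^{(m−1)−|μ|}. -/

import Mathlib

open scoped Classical

noncomputable section

/-- Variables of the extended Walsh cycle index ring:
`a k`, `b k`, `c k`, `β k`, `γ k` for `k ≥ 1`. -/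
inductive WVar : Type
  | a : ℕ → WVar
  | b : ℕ → WVar
  | c : ℕ → WVar
  | beta : ℕ → WVar
  | gamma : ℕ → WVar

/-- The extended Walsh cycle index ring `ℚ[a;b;c;β;γ]`. -/
abbrev WRing : Type := MvPolynomial WVar ℚ

/-- The variable `a_k`. -/
def va (k : ℕ) : WRing := MvPolynomial.X (WVar.a k)
/-- The variable `b_k`. -/
def vb (k : ℕ) : WRing := MvPolynomial.X (WVar.b k)
/-- The variable `c_k`. -/
def vc (k : ℕ) : WRing := MvPolynomial.X (WVar.c k)
/-- The variable `β_k`. -/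
def vbeta (k : ℕ) : WRing := MvPolynomial.X (WVar.beta k)
/-- The variable `γ_k`. -/
def vgamma (k : ℕ) : WRing := MvPolynomial.X (WVar.gamma k)

/-- The path graph `P_n` on `Fin n`, edges `{i, i+1}`. -/
def pathG (n : ℕ) : SimpleGraph (Fin n) :=
  SimpleGraph.fromRel (fun i j => (i : ℕ) + 1 = (j : ℕ))

/-- The cycle graph `C_n` on `Fin n`, edges `{i, i+1 mod n}`. -/
def cycG (n : ℕ) : SimpleGraph (Fin n) :=
  SimpleGraph.fromRel (fun i j => ((i : ℕ) + 1) % n = (j : ℕ))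

/-- The matchings of a graph `G`: finsets of pairwise disjoint edges of `G`. -/
def matchings {V : Type*} [Fintype V] (G : SimpleGraph V) : Finset (Finset (Sym2 V)) :=
  Finset.univ.filter (fun μ =>
    (↑μ : Set (Sym2 V)) ⊆ G.edgeSet ∧
    ∀ e ∈ μ, ∀ f ∈ μ, e ≠ f → ∀ v : V, v ∈ e → v ∉ f)

/-- `U_m(Y,Z) = Σ_{μ matching of P_m} Y^{|μ|} Z^{(m-1)-|μ|}`. -/
def Upoly {S : Type*} [CommSemiring S] (m : ℕ) (Y Z : S) : S :=
  ∑ μ ∈ matchings (pathG m), Y ^ μ.card * Z ^ ((m - 1) - μ.card)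

/-- `T_m(Y,Z) = Σ_{μ matching of C_m} Y^{|μ|} Z^{m-|μ|}` for `m ≥ 3`, with the
conventions `T_1(Y,Z) = Z` and `T_2(Y,Z) = 2YZ + Z²`. -/
def Tpoly {S : Type*} [CommSemiring S] (m : ℕ) (Y Z : S) : S :=
  if m = 1 then Z
  else if m = 2 then 2 * Y * Z + Z ^ 2
  else ∑ μ ∈ matchings (cycG m), Y ^ μ.card * Z ^ (m - μ.card)

/-- The permutation induced by `σ` on unordered pairs. -/
def edgePerm {V : Type*} (σ : Equiv.Perm V) : Equiv.Perm (Sym2 V) where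
  toFun := Sym2.map σ
  invFun := Sym2.map σ.symm
  left_inv := by intro e; induction e using Sym2.ind with | _ x y => simp
  right_inv := by intro e; induction e using Sym2.ind with | _ x y => simp

/-- The size of the cycle (orbit) of `σ` through the vertex `v`. -/
def orbSize {V : Type*} [Fintype V] (σ : Equiv.Perm V) (v : V) : ℕ :=
  (Finset.univ.filter fun u => σ.SameCycle v u).card

/-- `σ_k`: the number of `k`-cycles of `σ` on the vertices. -/
def vcyc {V : Type*} [Fintype V] (σ : Equiv.Perm V) (k : ℕ) : ℕ :=
  (Finset.univ.filter fun v => orbSize σ v = k).card / k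

/-- The length of the cycle of the induced edge permutation through `e`. -/
def eOrbLen {V : Type*} [Fintype V] (σ : Equiv.Perm V) (e : Sym2 V) : ℕ :=
  (Finset.univ.filter fun f => (edgePerm σ).SameCycle e f).card

/-- The edge cycle through `e` (of length `l = eOrbLen σ e`) is cylindrical:
`σ^l` fixes both endpoints of every edge of the cycle. -/
def IsCylE {V : Type*} [Fintype V] (σ : Equiv.Perm V) (e : Sym2 V) : Prop :=
  ∀ f : Sym2 V, (edgePerm σ).SameCycle e f → ∀ u v : V, f = s(u, v) →
    (σ ^ eOrbLen σ e) u = u ∧ (σ ^ eOrbLen σ e) v = v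

/-- The edge cycle through `e` (of length `l = eOrbLen σ e`) is Möbius:
`σ^l` exchanges the endpoints of every edge of the cycle. -/
def IsMobE {V : Type*} [Fintype V] (σ : Equiv.Perm V) (e : Sym2 V) : Prop :=
  ∀ f : Sym2 V, (edgePerm σ).SameCycle e f → ∀ u v : V, f = s(u, v) →
    u ≠ v ∧ (σ ^ eOrbLen σ e) u = v ∧ (σ ^ eOrbLen σ e) v = u

/-- The edge set of `G` as a finset. -/
def eFin {V : Type*} [Fintype V] (G : SimpleGraph V) : Finset (Sym2 V) :=
  G.edgeFinset

/-- `cyl_{k,Y}(σ)`: the number of cylindrical edge cycles of length `k` of sort `Y`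
(consisting of edges of the matching `μ`). -/
def cylCntY {V : Type*} [Fintype V] (G : SimpleGraph V) (μ : Finset (Sym2 V))
    (σ : Equiv.Perm V) (k : ℕ) : ℕ :=
  ((eFin G).filter fun e => e ∈ μ ∧ eOrbLen σ e = k ∧ IsCylE σ e).card / k

/-- `möb_{k,Y}(σ)`: the number of Möbius edge cycles of length `k` of sort `Y`. -/
def mobCntY {V : Type*} [Fintype V] (G : SimpleGraph V) (μ : Finset (Sym2 V))
    (σ : Equiv.Perm V) (k : ℕ) : ℕ :=
  ((eFin G).filter fun e => e ∈ μ ∧ eOrbLen σ e = k ∧ IsMobE σ e).card / k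

/-- `cyl_{k,Z}(σ)`: the number of cylindrical edge cycles of length `k` of sort `Z`
(consisting of edges not in the matching `μ`). -/
def cylCntZ {V : Type*} [Fintype V] (G : SimpleGraph V) (μ : Finset (Sym2 V))
    (σ : Equiv.Perm V) (k : ℕ) : ℕ :=
  ((eFin G).filter fun e => e ∉ μ ∧ eOrbLen σ e = k ∧ IsCylE σ e).card / k

/-- `möb_{k,Z}(σ)`: the number of Möbius edge cycles of length `k` of sort `Z`. -/
def mobCntZ {V : Type*} [Fintype V] (G : SimpleGraph V) (μ : Finset (Sym2 V))
    (σ : Equiv.Perm V) (k : ℕ) : ℕ :=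
  ((eFin G).filter fun e => e ∉ μ ∧ eOrbLen σ e = k ∧ IsMobE σ e).card / k

/-- The extended cycle index monomial `w^μ(σ)` of a matched graph `(G,μ)` with an
automorphism `σ` fixing `μ`. -/
def wM {V : Type*} [Fintype V] (G : SimpleGraph V) (μ : Finset (Sym2 V))
    (σ : Equiv.Perm V) : WRing :=
  (∏ k ∈ Finset.range (Fintype.card V * Fintype.card V + 2), va k ^ vcyc σ k) *
  (∏ k ∈ Finset.range (Fintype.card V * Fintype.card V + 2), vb k ^ cylCntY G μ σ k) *
  (∏ k ∈ Finset.range (Fintype.card V * Fintype.card V + 2), vc k ^ mobCntY G μ σ k) *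
  (∏ k ∈ Finset.range (Fintype.card V * Fintype.card V + 2), vbeta k ^ cylCntZ G μ σ k) *
  (∏ k ∈ Finset.range (Fintype.card V * Fintype.card V + 2), vgamma k ^ mobCntZ G μ σ k)

/-- The automorphisms of `G`, as a finset of permutations of the vertices. -/
def autF {V : Type*} [Fintype V] (G : SimpleGraph V) : Finset (Equiv.Perm V) :=
  Finset.univ.filter fun σ => ∀ u v : V, G.Adj (σ u) (σ v) ↔ G.Adj u v

/-- The matchings of `G` fixed by the automorphism `σ` (i.e. `σ(μ) = μ`). -/
def fixedMatchings {V : Type*} [Fintype V] (G : SimpleGraph V) (σ : Equiv.Perm V) :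
    Finset (Finset (Sym2 V)) :=
  (matchings G).filter fun μ => μ.image (Sym2.map σ) = μ

/-!
The automorphisms of `P_n` are the identity and the reversal `i ↦ n - 1 - i`. The identity fixes
every matching and every cycle of it has length one, which gives `a_1^n U_n(b_1, β_1)`.

For `n = 2c + 2` the reversal is a fixed-point-free involution: its vertex cycles are `c + 1`
transpositions, the middle edge `{c, c + 1}` is its only fixed edge and forms a Möbius 1-cycle, and
every other edge lies in a cylindrical 2-cycle. Encoding a matching by the indices `i` of its edges
`{i, i + 1}`, the reversal-invariant matchings become the sparse subsets of `{0, …, 2c}` that are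
symmetric about `c`. Such a set is determined by its part below `c`: a sparse subset of
`{0, …, c - 1}` (a matching of `P_{c+1}`) when `c` is absent, and of `{0, …, c - 2}` (a matching of
`P_c`) when the middle edge `c` is present, since then `c - 1` is excluded. The two cases give the
terms `γ_1 U_{n/2}(b_2, β_2)` and `c_1 β_2 U_{(n-2)/2}(b_2, β_2)`.
-/

open Finset

lemma prod_range_pow_card_filter_div {α M : Type*} [CommMonoid M] (x : ℕ → M) {N k₀ : ℕ}
    (hk₀ : k₀ < N) (s : Finset α) (len : α → ℕ) (hlen : ∀ a ∈ s, len a = k₀) :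
    ∏ k ∈ range N, x k ^ (#{a ∈ s | len a = k} / k) = x k₀ ^ (#s / k₀) := by
  rw [prod_eq_single_of_mem k₀ (mem_range.2 hk₀), filter_true_of_mem hlen]
  intro k _ hk
  rw [filter_false_of_mem fun a ha => by rw [hlen a ha]; exact Ne.symm hk, card_empty,
    Nat.zero_div, pow_zero]

section Involution

variable {α : Type*} [Fintype α]

lemma Equiv.Perm.sameCycle_iff_of_involutive {π : Equiv.Perm α} (hπ : Function.Involutive π)
    {x y : α} : π.SameCycle x y ↔ y = x ∨ y = π x := by
  constructor
  · intro h
    obtain ⟨i, -, rfl⟩ := h.exists_pow_eq'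
    rw [Equiv.Perm.coe_pow]
    rcases Nat.even_or_odd i with hi | hi
    · exact Or.inl (by rw [hπ.iterate_even hi, id])
    · exact Or.inr (by rw [hπ.iterate_odd hi])
  · rintro (rfl | rfl)
    · exact .refl π y
    · exact (Equiv.Perm.sameCycle_apply_right).2 (.refl π x)

lemma Equiv.Perm.card_sameCycle_of_involutive {π : Equiv.Perm α} (hπ : Function.Involutive π)
    (x : α) : #{y | π.SameCycle x y} = if π x = x then 1 else 2 := by
  have hpair : ({y | π.SameCycle x y} : Finset α) = {x, π x} := by
    ext y
    simp [π.sameCycle_iff_of_involutive hπ]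
  rw [hpair]
  split_ifs with hx
  · simp [hx]
  · exact card_pair (Ne.symm hx)

end Involution

section CycleIndex

@[simp]
lemma edgePerm_apply {V : Type*} (σ : Equiv.Perm V) (e : Sym2 V) : edgePerm σ e = e.map σ :=
  rfl

lemma edgePerm_involutive {V : Type*} {σ : Equiv.Perm V} (hσ : Function.Involutive σ) :
    Function.Involutive (edgePerm σ) := fun e => by
  rw [edgePerm_apply, edgePerm_apply, Sym2.map_map, hσ.comp_self, Sym2.map_id, id]

variable {V : Type*} [Fintype V]

lemma orbSize_of_involutive {σ : Equiv.Perm V} (hσ : Function.Involutive σ) (v : V) :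
    orbSize σ v = if σ v = v then 1 else 2 :=
  σ.card_sameCycle_of_involutive hσ v

lemma eOrbLen_of_involutive {σ : Equiv.Perm V} (hσ : Function.Involutive σ) (e : Sym2 V) :
    eOrbLen σ e = if edgePerm σ e = e then 1 else 2 := by
  rw [eOrbLen]
  convert (edgePerm σ).card_sameCycle_of_involutive (edgePerm_involutive hσ) e

lemma isCylE_of_pow_eOrbLen_eq_one {σ : Equiv.Perm V} {e : Sym2 V}
    (h : σ ^ eOrbLen σ e = 1) : IsCylE σ e := by
  intro _ _ u v _
  simp [h]

lemma not_isMobE_of_pow_eOrbLen_eq_one {σ : Equiv.Perm V} {e : Sym2 V}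
    (h : σ ^ eOrbLen σ e = 1) : ¬ IsMobE σ e := by
  induction e using Sym2.ind with
  | _ u v =>
    intro hmob
    obtain ⟨huv, hu, -⟩ := hmob s(u, v) (.refl _ _) u v rfl
    simp [h] at hu
    exact huv hu

lemma isMobE_iff_of_fixedPointFree {σ : Equiv.Perm V} (hσ : Function.Involutive σ)
    (hfree : ∀ v, σ v ≠ v) {e : Sym2 V} (he : ¬ e.IsDiag) :
    IsMobE σ e ↔ edgePerm σ e = e := by
  by_cases hfix : edgePerm σ e = e
  · have hlen : eOrbLen σ e = 1 := by rw [eOrbLen_of_involutive hσ, if_pos hfix]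
    refine iff_of_true ?_ hfix
    intro f hf u v hfuv
    obtain rfl : f = e := by
      rcases (edgePerm σ).sameCycle_iff_of_involutive (edgePerm_involutive hσ) |>.1 hf with h | h
      · exact h
      · rw [h, hfix]
    subst hfuv
    rw [edgePerm_apply, Sym2.map_mk, Sym2.eq_iff] at hfix
    rw [hlen, pow_one]
    exact ⟨by simpa using he, hfix.resolve_left fun h => hfree u h.1⟩
  · have hlen : eOrbLen σ e = 2 := by rw [eOrbLen_of_involutive hσ, if_neg hfix]
    refine iff_of_false (not_isMobE_of_pow_eOrbLen_eq_one ?_) hfix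
    rw [hlen, sq]
    exact Equiv.ext hσ

lemma isCylE_iff_of_fixedPointFree {σ : Equiv.Perm V} (hσ : Function.Involutive σ)
    (hfree : ∀ v, σ v ≠ v) (e : Sym2 V) :
    IsCylE σ e ↔ edgePerm σ e ≠ e := by
  by_cases hfix : edgePerm σ e = e
  · have hlen : eOrbLen σ e = 1 := by rw [eOrbLen_of_involutive hσ, if_pos hfix]
    refine iff_of_false ?_ (not_not.2 hfix)
    induction e using Sym2.ind with
    | _ u v =>
      intro hcyl
      have := (hcyl s(u, v) (.refl _ _) u v rfl).1
      rw [hlen, pow_one] at this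
      exact hfree u this
  · refine iff_of_true (isCylE_of_pow_eOrbLen_eq_one ?_) hfix
    rw [eOrbLen_of_involutive hσ, if_neg hfix, sq]
    exact Equiv.ext hσ

variable (G : SimpleGraph V) (μ : Finset (Sym2 V)) (σ : Equiv.Perm V) (k : ℕ)

lemma cylCntY_eq :
    cylCntY G μ σ k = #{e ∈ {e ∈ eFin G | e ∈ μ ∧ IsCylE σ e} | eOrbLen σ e = k} / k := by
  rw [cylCntY, filter_filter]
  congr 2
  exact filter_congr fun _ _ => by tauto

lemma mobCntY_eq :
    mobCntY G μ σ k = #{e ∈ {e ∈ eFin G | e ∈ μ ∧ IsMobE σ e} | eOrbLen σ e = k} / k := by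
  rw [mobCntY, filter_filter]
  congr 2
  exact filter_congr fun _ _ => by tauto

lemma cylCntZ_eq :
    cylCntZ G μ σ k = #{e ∈ {e ∈ eFin G | e ∉ μ ∧ IsCylE σ e} | eOrbLen σ e = k} / k := by
  rw [cylCntZ, filter_filter]
  congr 2
  exact filter_congr fun _ _ => by tauto

lemma mobCntZ_eq :
    mobCntZ G μ σ k = #{e ∈ {e ∈ eFin G | e ∉ μ ∧ IsMobE σ e} | eOrbLen σ e = k} / k := by
  rw [mobCntZ, filter_filter]
  congr 2
  exact filter_congr fun _ _ => by tauto

variable {G μ σ}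

lemma wM_one (hμ : μ ⊆ eFin G) :
    wM G μ 1 = va 1 ^ Fintype.card V * vb 1 ^ #μ * vbeta 1 ^ (#(eFin G) - #μ) := by
  have hN : 1 < Fintype.card V * Fintype.card V + 2 := by omega
  have hone : Function.Involutive (1 : Equiv.Perm V) := fun _ => rfl
  have horb (v : V) : orbSize 1 v = 1 := by simp [orbSize_of_involutive hone]
  have hlen (e : Sym2 V) : eOrbLen 1 e = 1 := by simp [eOrbLen_of_involutive hone]
  have hpow (e : Sym2 V) : (1 : Equiv.Perm V) ^ eOrbLen 1 e = 1 := one_pow _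
  simp only [wM, vcyc, cylCntY_eq, mobCntY_eq, cylCntZ_eq, mobCntZ_eq]
  rw [prod_range_pow_card_filter_div va hN _ _ fun v _ => horb v,
    prod_range_pow_card_filter_div vb hN _ _ fun e _ => hlen e,
    prod_range_pow_card_filter_div vc hN _ _ fun e _ => hlen e,
    prod_range_pow_card_filter_div vbeta hN _ _ fun e _ => hlen e,
    prod_range_pow_card_filter_div vgamma hN _ _ fun e _ => hlen e]
  have hcyl (e : Sym2 V) : IsCylE 1 e ↔ True :=
    iff_true_intro (isCylE_of_pow_eOrbLen_eq_one (hpow e))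
  have hY : {e ∈ eFin G | e ∈ μ ∧ IsCylE 1 e} = μ := by
    ext e
    simp only [mem_filter, hcyl, and_true]
    exact ⟨And.right, fun h => ⟨hμ h, h⟩⟩
  have hZ : {e ∈ eFin G | e ∉ μ ∧ IsCylE 1 e} = eFin G \ μ := by
    ext e
    simp only [mem_filter, mem_sdiff, hcyl, and_true]
  have hmob (p : Sym2 V → Prop) [DecidablePred p] : {e ∈ eFin G | p e ∧ IsMobE 1 e} = ∅ :=
    filter_false_of_mem fun e _ h => not_isMobE_of_pow_eOrbLen_eq_one (hpow e) h.2
  rw [hY, hZ, hmob, hmob, card_sdiff_of_subset hμ]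
  simp

lemma wM_of_fixedPointFree [Nonempty V] (hσ : Function.Involutive σ) (hfree : ∀ v, σ v ≠ v) :
    wM G μ σ = va 2 ^ (Fintype.card V / 2) *
      vb 2 ^ (#{e ∈ eFin G | e ∈ μ ∧ edgePerm σ e ≠ e} / 2) *
      vc 1 ^ #{e ∈ eFin G | e ∈ μ ∧ edgePerm σ e = e} *
      vbeta 2 ^ (#{e ∈ eFin G | e ∉ μ ∧ edgePerm σ e ≠ e} / 2) *
      vgamma 1 ^ #{e ∈ eFin G | e ∉ μ ∧ edgePerm σ e = e} := by
  have h1 : 1 < Fintype.card V * Fintype.card V + 2 := by omega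
  have h2 : 2 < Fintype.card V * Fintype.card V + 2 := by
    have := Fintype.card_pos (α := V); nlinarith
  have hdiag {e} (he : e ∈ eFin G) : ¬ e.IsDiag :=
    G.not_isDiag_of_mem_edgeSet (SimpleGraph.mem_edgeFinset.1 he)
  have hcyl (e) := isCylE_iff_of_fixedPointFree hσ hfree e
  have hmob {e} (he : e ∈ eFin G) := isMobE_iff_of_fixedPointFree hσ hfree (hdiag he)
  have hlen (e) : eOrbLen σ e = if edgePerm σ e = e then 1 else 2 := eOrbLen_of_involutive hσ e
  simp only [wM, vcyc, cylCntY_eq, mobCntY_eq, cylCntZ_eq, mobCntZ_eq]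
  rw [prod_range_pow_card_filter_div va h2 _ _ fun v _ => by simp [orbSize_of_involutive hσ, hfree],
    prod_range_pow_card_filter_div vb h2 _ _ fun e he => by
      rw [hlen, if_neg ((hcyl e).1 (mem_filter.1 he).2.2)],
    prod_range_pow_card_filter_div vc h1 _ _ fun e he => by
      rw [hlen, if_pos ((hmob (mem_filter.1 he).1).1 (mem_filter.1 he).2.2)],
    prod_range_pow_card_filter_div vbeta h2 _ _ fun e he => by
      rw [hlen, if_neg ((hcyl e).1 (mem_filter.1 he).2.2)],
    prod_range_pow_card_filter_div vgamma h1 _ _ fun e he => by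
      rw [hlen, if_pos ((hmob (mem_filter.1 he).1).1 (mem_filter.1 he).2.2)]]
  simp only [Nat.div_one, card_univ]
  rw [filter_congr fun e _ => and_congr_right_iff.2 fun _ => hcyl e,
    filter_congr fun e he => and_congr_right_iff.2 fun _ => hmob he,
    filter_congr fun e _ => and_congr_right_iff.2 fun _ => hcyl e,
    filter_congr fun e he => and_congr_right_iff.2 fun _ => hmob he]

end CycleIndex

lemma mem_autF_iff {V : Type*} [Fintype V] {G : SimpleGraph V} {σ : Equiv.Perm V} :
    σ ∈ autF G ↔ ∀ u v, G.Adj (σ u) (σ v) ↔ G.Adj u v := by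
  simp [autF]

lemma mul_mem_autF {V : Type*} [Fintype V] {G : SimpleGraph V} {σ τ : Equiv.Perm V}
    (hσ : σ ∈ autF G) (hτ : τ ∈ autF G) : σ * τ ∈ autF G :=
  mem_autF_iff.2 fun u v => (mem_autF_iff.1 hσ (τ u) (τ v)).trans (mem_autF_iff.1 hτ u v)

section PathGraph

variable {n : ℕ}

lemma pathG_adj {u v : Fin n} : (pathG n).Adj u v ↔ (u : ℕ) + 1 = v ∨ (v : ℕ) + 1 = u := by
  rw [pathG, SimpleGraph.fromRel_adj]
  refine ⟨And.right, fun h => ⟨?_, h⟩⟩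
  rintro rfl
  omega

lemma revPerm_mem_autF : (Fin.revPerm : Equiv.Perm (Fin n)) ∈ autF (pathG n) := by
  refine mem_autF_iff.2 fun u v => ?_
  simp only [Fin.revPerm_apply, pathG_adj, Fin.val_rev]
  omega

lemma eq_one_of_mem_autF_pathG {σ : Equiv.Perm (Fin n)} (hσ : σ ∈ autF (pathG n))
    (hn : 0 < n) (h0 : (σ ⟨0, hn⟩ : ℕ) = 0) : σ = 1 := by
  have hstep (i : ℕ) (h : i + 1 < n) := (mem_autF_iff.1 hσ ⟨i, by omega⟩ ⟨i + 1, h⟩).2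
    (pathG_adj.2 (Or.inl rfl))
  -- an automorphism fixing `i` and `i + 1` must fix `i + 2`, the other neighbour of `i + 1`
  have hfix (i : ℕ) (h : i + 1 < n) :
      (σ ⟨i, by omega⟩ : ℕ) = i ∧ (σ ⟨i + 1, h⟩ : ℕ) = i + 1 := by
    induction i with
    | zero =>
      have := pathG_adj.1 (hstep 0 h)
      omega
    | succ i ih =>
      obtain ⟨hi, hi1⟩ := ih (by omega)
      have hadj := pathG_adj.1 (hstep (i + 1) h)
      have hne : (σ ⟨i + 1 + 1, h⟩ : ℕ) ≠ σ ⟨i, by omega⟩ :=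
        Fin.val_injective.ne (σ.injective.ne (by simp only [ne_eq, Fin.mk.injEq]; omega))
      omega
  ext v
  rcases v with ⟨_ | i, hi⟩
  · exact h0
  · exact (hfix i hi).2

lemma apply_zero_of_mem_autF_pathG {σ : Equiv.Perm (Fin n)} (hσ : σ ∈ autF (pathG n))
    (hn : 0 < n) : (σ ⟨0, hn⟩ : ℕ) = 0 ∨ (σ ⟨0, hn⟩ : ℕ) = n - 1 := by
  by_contra! hx
  have := (σ ⟨0, hn⟩).isLt
  -- the two neighbours of `σ 0` would both come from the only neighbour `1` of `0`
  have hnbr (y : Fin n) (hy : (pathG n).Adj y (σ ⟨0, hn⟩)) : (σ.symm y : ℕ) = 1 := by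
    have := pathG_adj.1 ((mem_autF_iff.1 hσ (σ.symm y) ⟨0, hn⟩).1 (by rwa [σ.apply_symm_apply]))
    simp only at this
    omega
  have hlo := hnbr ⟨σ ⟨0, hn⟩ - 1, by omega⟩ (pathG_adj.2 (Or.inl (by simp; omega)))
  have hhi := hnbr ⟨σ ⟨0, hn⟩ + 1, by omega⟩ (pathG_adj.2 (Or.inr rfl))
  have := congrArg Fin.val (σ.symm.injective (Fin.ext (hlo.trans hhi.symm)))
  simp at this

lemma autF_pathG (hn : 0 < n) : autF (pathG n) = {1, Fin.revPerm} := by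
  refine Subset.antisymm (fun σ hσ => ?_)
    (insert_subset (by simp [autF]) (by simp [revPerm_mem_autF]))
  rcases apply_zero_of_mem_autF_pathG hσ hn with h | h
  · simp [eq_one_of_mem_autF_pathG hσ hn h]
  · have hrev := eq_one_of_mem_autF_pathG (mul_mem_autF revPerm_mem_autF hσ) hn
      (by simp [Fin.val_rev, h]; omega)
    rw [eq_inv_of_mul_eq_one_right hrev]
    simp [Equiv.Perm.inv_def, Fin.revPerm_symm]

end PathGraph

def IsSparse (S : Finset ℕ) : Prop := ∀ i ∈ S, i + 1 ∉ S

def sparseSets (m : ℕ) : Finset (Finset ℕ) := {S ∈ (range m).powerset | IsSparse S}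

lemma mem_sparseSets {m : ℕ} {S : Finset ℕ} : S ∈ sparseSets m ↔ S ⊆ range m ∧ IsSparse S := by
  simp [sparseSets]

def mirror (m : ℕ) (S : Finset ℕ) : Finset ℕ := S.image (m - ·)

section Mirror

variable {M : Type*} [AddCommMonoid M] {m c : ℕ} {S T : Finset ℕ}

lemma mem_mirror (hS : ∀ y ∈ S, y ≤ m) {x : ℕ} : x ∈ mirror m S ↔ x ≤ m ∧ m - x ∈ S := by
  simp only [mirror, mem_image]
  constructor
  · rintro ⟨y, hy, rfl⟩
    rw [Nat.sub_sub_self (hS y hy)]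
    exact ⟨Nat.sub_le _ _, hy⟩
  · rintro ⟨hx, hmx⟩
    exact ⟨m - x, hmx, Nat.sub_sub_self hx⟩

lemma mirror_mirror (hS : ∀ y ∈ S, y ≤ m) : mirror m (mirror m S) = S := by
  rw [mirror, mirror, image_image]
  exact (image_congr fun y hy => Nat.sub_sub_self (hS y hy)).trans image_id

lemma card_mirror (hS : ∀ y ∈ S, y ≤ m) : #(mirror m S) = #S :=
  card_image_of_injOn fun x hx y hy h => by
    have := hS x hx; have := hS y hy; omega

lemma IsSparse.mono (hT : IsSparse T) (hST : S ⊆ T) : IsSparse S :=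
  fun i hi hi1 => hT i (hST hi) (hST hi1)

lemma mem_union_mirror (hT : T ⊆ range c) {x : ℕ} :
    x ∈ T ∪ mirror (2 * c) T ↔ x ∈ T ∨ c < x ∧ x ≤ 2 * c ∧ 2 * c - x ∈ T := by
  have hle : ∀ y ∈ T, y ≤ 2 * c := fun y hy => by have := mem_range.1 (hT hy); omega
  rw [mem_union, mem_mirror hle]
  refine or_congr_right ⟨fun ⟨hx, hmx⟩ => ⟨?_, hx, hmx⟩, fun h => h.2⟩
  have := mem_range.1 (hT hmx)
  omega

lemma union_mirror_subset (hT : T ⊆ range c) : T ∪ mirror (2 * c) T ⊆ range (2 * c + 1) := by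
  intro x hx
  rw [mem_union_mirror hT] at hx
  rw [mem_range]
  rcases hx with hx | hx
  · have := mem_range.1 (hT hx); omega
  · omega

lemma center_not_mem_union_mirror (hT : T ⊆ range c) : c ∉ T ∪ mirror (2 * c) T := by
  rw [mem_union_mirror hT]
  rintro (h | h)
  · exact absurd (mem_range.1 (hT h)) (lt_irrefl c)
  · omega

lemma mirror_union_mirror (hT : T ⊆ range c) :
    mirror (2 * c) (T ∪ mirror (2 * c) T) = T ∪ mirror (2 * c) T := by
  have hle : ∀ y ∈ T, y ≤ 2 * c := fun y hy => by have := mem_range.1 (hT hy); omega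
  rw [mirror, image_union, ← mirror, ← mirror, mirror_mirror hle, union_comm]

lemma card_union_mirror (hT : T ⊆ range c) : #(T ∪ mirror (2 * c) T) = 2 * #T := by
  have hle : ∀ y ∈ T, y ≤ 2 * c := fun y hy => by have := mem_range.1 (hT hy); omega
  rw [card_union_of_disjoint, card_mirror hle, two_mul]
  refine disjoint_left.2 fun x hx hx' => ?_
  obtain ⟨-, hmx⟩ := (mem_mirror hle).1 hx'
  have := mem_range.1 (hT hx)
  have := mem_range.1 (hT hmx)
  omega

lemma filter_lt_union_mirror (hT : T ⊆ range c) : {x ∈ T ∪ mirror (2 * c) T | x < c} = T := by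
  ext x
  rw [mem_filter, mem_union_mirror hT]
  constructor
  · rintro ⟨hx | hx, hxc⟩
    · exact hx
    · omega
  · intro hx
    exact ⟨Or.inl hx, mem_range.1 (hT hx)⟩

lemma isSparse_union_mirror (hT : T ⊆ range c) (hsparse : IsSparse T) :
    IsSparse (T ∪ mirror (2 * c) T) := by
  intro x hx hx1
  rw [mem_union_mirror hT] at hx hx1
  rcases hx with hx | ⟨hcx, hx2c, hx⟩ <;> rcases hx1 with hx1 | ⟨hcx1, hx12c, hx1⟩
  · exact hsparse x hx hx1
  · have := mem_range.1 (hT hx); omega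
  · have := mem_range.1 (hT hx1); omega
  · exact hsparse _ hx1 (by rwa [show 2 * c - (x + 1) + 1 = 2 * c - x by omega])

lemma union_mirror_filter_lt (hS : S ⊆ range (2 * c + 1)) (hsym : mirror (2 * c) S = S) :
    {x ∈ S | x < c} ∪ mirror (2 * c) {x ∈ S | x < c} = S.erase c := by
  have hlow : {x ∈ S | x < c} ⊆ range c := fun x hx => mem_range.2 (mem_filter.1 hx).2
  have hle : ∀ y ∈ S, y ≤ 2 * c := fun y hy => by have := mem_range.1 (hS hy); omega
  ext x
  rw [mem_union_mirror hlow, mem_erase, mem_filter, mem_filter]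
  constructor
  · rintro (⟨hx, hxc⟩ | ⟨hcx, hx2c, hmx, -⟩)
    · exact ⟨by omega, hx⟩
    · refine ⟨by omega, ?_⟩
      rw [← hsym, mem_mirror hle]
      exact ⟨hx2c, hmx⟩
  · rintro ⟨hxc, hx⟩
    rcases lt_or_gt_of_ne hxc with h | h
    · exact Or.inl ⟨hx, h⟩
    · rw [← hsym, mem_mirror hle] at hx
      exact Or.inr ⟨h, hx.1, hx.2, by omega⟩

lemma isSparse_insert_center (hT : T ⊆ range (c - 1)) (hsparse : IsSparse T) :
    IsSparse (insert c (T ∪ mirror (2 * c) T)) := by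
  have hT' : T ⊆ range c := hT.trans (range_subset_range.2 (Nat.sub_le c 1))
  intro x hx hx1
  rw [mem_insert] at hx hx1
  rcases hx with rfl | hx <;> rcases hx1 with hx1 | hx1
  · omega
  · rcases (mem_union_mirror hT').1 hx1 with h | ⟨-, -, h⟩ <;>
      · have := mem_range.1 (hT h); omega
  · rcases (mem_union_mirror hT').1 hx with h | ⟨h, -⟩
    · have := mem_range.1 (hT h); omega
    · omega
  · exact isSparse_union_mirror hT' hsparse x hx hx1

lemma sum_sparseSets_mirror_center_not_mem (c : ℕ) (g : ℕ → M) :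
    ∑ S ∈ sparseSets (2 * c + 1) with mirror (2 * c) S = S ∧ c ∉ S, g #S =
      ∑ T ∈ sparseSets c, g (2 * #T) := by
  symm
  refine sum_nbij' (fun T => T ∪ mirror (2 * c) T) (fun S => {x ∈ S | x < c})
    (fun T hT => ?_) (fun S hS => ?_) (fun T hT => ?_) (fun S hS => ?_) (fun T hT => ?_)
  · obtain ⟨hT, hsparse⟩ := mem_sparseSets.1 hT
    exact mem_filter.2 ⟨mem_sparseSets.2 ⟨union_mirror_subset hT,
      isSparse_union_mirror hT hsparse⟩, mirror_union_mirror hT, center_not_mem_union_mirror hT⟩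
  · obtain ⟨hS, -, -⟩ := mem_filter.1 hS
    exact mem_sparseSets.2 ⟨fun x hx => mem_range.2 (mem_filter.1 hx).2,
      (mem_sparseSets.1 hS).2.mono (filter_subset _ _)⟩
  · exact filter_lt_union_mirror (mem_sparseSets.1 hT).1
  · obtain ⟨hS, hsym, hc⟩ := mem_filter.1 hS
    rw [union_mirror_filter_lt (mem_sparseSets.1 hS).1 hsym, erase_eq_of_notMem hc]
  · rw [card_union_mirror (mem_sparseSets.1 hT).1]

lemma sum_sparseSets_mirror_center_mem (c : ℕ) (g : ℕ → M) :
    ∑ S ∈ sparseSets (2 * c + 1) with mirror (2 * c) S = S ∧ c ∈ S, g #S =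
      ∑ T ∈ sparseSets (c - 1), g (2 * #T + 1) := by
  symm
  refine sum_nbij' (fun T => insert c (T ∪ mirror (2 * c) T)) (fun S => {x ∈ S | x < c})
    (fun T hT => ?_) (fun S hS => ?_) (fun T hT => ?_) (fun S hS => ?_) (fun T hT => ?_)
  · obtain ⟨hT, hsparse⟩ := mem_sparseSets.1 hT
    have hT' : T ⊆ range c := hT.trans (range_subset_range.2 (Nat.sub_le c 1))
    refine mem_filter.2 ⟨mem_sparseSets.2 ⟨insert_subset (mem_range.2 (by omega))
      (union_mirror_subset hT'), isSparse_insert_center hT hsparse⟩, ?_, mem_insert_self _ _⟩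
    rw [mirror, image_insert, ← mirror, mirror_union_mirror hT', Nat.two_mul, Nat.add_sub_cancel]
  · obtain ⟨hS, -, hc⟩ := mem_filter.1 hS
    obtain ⟨-, hsparse⟩ := mem_sparseSets.1 hS
    refine mem_sparseSets.2 ⟨fun x hx => ?_, hsparse.mono (filter_subset _ _)⟩
    obtain ⟨hx, hxc⟩ := mem_filter.1 hx
    have : x + 1 ≠ c := fun h => hsparse x hx (h ▸ hc)
    exact mem_range.2 (by omega)
  · have hT' : T ⊆ range c := (mem_sparseSets.1 hT).1.trans (range_subset_range.2 (Nat.sub_le c 1))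
    rw [filter_insert, if_neg (lt_irrefl c), filter_lt_union_mirror hT']
  · obtain ⟨hS, hsym, hc⟩ := mem_filter.1 hS
    rw [union_mirror_filter_lt (mem_sparseSets.1 hS).1 hsym, insert_erase hc]
  · have hT' : T ⊆ range c := (mem_sparseSets.1 hT).1.trans (range_subset_range.2 (Nat.sub_le c 1))
    rw [card_insert_of_notMem (center_not_mem_union_mirror hT'), card_union_mirror hT']

end Mirror

section PathEdges

variable {n : ℕ}

def edgeIndex (e : Sym2 (Fin n)) : ℕ := e.inf

@[simp]
lemma edgeIndex_mk (u v : Fin n) : edgeIndex s(u, v) = min (u : ℕ) v := rfl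

lemma mem_eFin_pathG {e : Sym2 (Fin n)} :
    e ∈ eFin (pathG n) ↔ ∃ u v : Fin n, (u : ℕ) + 1 = v ∧ e = s(u, v) := by
  rw [eFin, SimpleGraph.mem_edgeFinset]
  induction e using Sym2.ind with
  | _ u v =>
    rw [SimpleGraph.mem_edgeSet, pathG_adj]
    constructor
    · rintro (h | h)
      · exact ⟨u, v, h, rfl⟩
      · exact ⟨v, u, h, Sym2.eq_swap⟩
    · rintro ⟨a, b, hab, he⟩
      rcases Sym2.eq_iff.1 he with ⟨rfl, rfl⟩ | ⟨rfl, rfl⟩ <;> omega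

lemma edgeIndex_injOn : Set.InjOn edgeIndex (eFin (pathG n) : Set (Sym2 (Fin n))) := by
  rintro e he f hf hef
  obtain ⟨u, v, huv, rfl⟩ := mem_eFin_pathG.1 he
  obtain ⟨w, x, hwx, rfl⟩ := mem_eFin_pathG.1 hf
  simp only [edgeIndex_mk] at hef
  obtain rfl : u = w := Fin.ext (by omega)
  obtain rfl : v = x := Fin.ext (by omega)
  rfl

lemma image_edgeIndex_eFin : (eFin (pathG n)).image edgeIndex = range (n - 1) := by
  ext i
  simp only [mem_image, mem_range, mem_eFin_pathG]
  constructor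
  · rintro ⟨e, ⟨u, v, huv, rfl⟩, rfl⟩
    simp only [edgeIndex_mk]
    omega
  · intro hi
    exact ⟨_, ⟨⟨i, by omega⟩, ⟨i + 1, by omega⟩, rfl, rfl⟩, by simp⟩

lemma card_eFin_pathG : #(eFin (pathG n)) = n - 1 := by
  rw [← card_range (n - 1), ← image_edgeIndex_eFin, card_image_of_injOn edgeIndex_injOn]

lemma card_image_edgeIndex {μ : Finset (Sym2 (Fin n))} (hμ : μ ⊆ eFin (pathG n)) :
    #(μ.image edgeIndex) = #μ :=
  card_image_of_injOn (edgeIndex_injOn.mono hμ)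

lemma image_edgeIndex_subset {μ : Finset (Sym2 (Fin n))} (hμ : μ ⊆ eFin (pathG n)) :
    μ.image edgeIndex ⊆ range (n - 1) :=
  image_edgeIndex_eFin ▸ image_subset_image hμ

lemma filter_edgeIndex_mem_image {μ : Finset (Sym2 (Fin n))} (hμ : μ ⊆ eFin (pathG n)) :
    {e ∈ eFin (pathG n) | edgeIndex e ∈ μ.image edgeIndex} = μ := by
  ext e
  simp only [mem_filter, mem_image]
  constructor
  · rintro ⟨he, f, hf, hfe⟩
    rwa [← edgeIndex_injOn (hμ hf) he hfe]
  · exact fun he => ⟨hμ he, e, he, rfl⟩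

lemma image_edgeIndex_filter {S : Finset ℕ} (hS : S ⊆ range (n - 1)) :
    {e ∈ eFin (pathG n) | edgeIndex e ∈ S}.image edgeIndex = S := by
  rw [← filter_image (p := (· ∈ S)), image_edgeIndex_eFin, filter_mem_eq_inter, inter_eq_right.2 hS]

lemma exists_mem_mem_iff_of_mem_eFin {e f : Sym2 (Fin n)} (he : e ∈ eFin (pathG n))
    (hf : f ∈ eFin (pathG n)) : (∃ v, v ∈ e ∧ v ∈ f) ↔
      edgeIndex e = edgeIndex f ∨ edgeIndex e + 1 = edgeIndex f ∨
        edgeIndex f + 1 = edgeIndex e := by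
  obtain ⟨u, v, huv, rfl⟩ := mem_eFin_pathG.1 he
  obtain ⟨w, x, hwx, rfl⟩ := mem_eFin_pathG.1 hf
  simp only [edgeIndex_mk, Sym2.mem_iff]
  constructor
  · rintro ⟨y, rfl | rfl, rfl | rfl⟩ <;> omega
  · rintro (h | h | h)
    · exact ⟨u, Or.inl rfl, Or.inl (Fin.ext (by omega))⟩
    · exact ⟨v, Or.inr rfl, Or.inl (Fin.ext (by omega))⟩
    · exact ⟨u, Or.inl rfl, Or.inr (Fin.ext (by omega))⟩

lemma mem_matchings_pathG {μ : Finset (Sym2 (Fin n))} :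
    μ ∈ matchings (pathG n) ↔ μ ⊆ eFin (pathG n) ∧ IsSparse (μ.image edgeIndex) := by
  have hsub : (↑μ : Set (Sym2 (Fin n))) ⊆ (pathG n).edgeSet ↔ μ ⊆ eFin (pathG n) := by
    simp [eFin, Set.subset_def, subset_iff]
  simp only [matchings, mem_filter, mem_univ, true_and, hsub]
  refine and_congr_right fun hμ => ?_
  constructor
  · intro hdisj i hi hi1
    obtain ⟨e, he, rfl⟩ := mem_image.1 hi
    obtain ⟨f, hf, hef⟩ := mem_image.1 hi1
    have hne : e ≠ f := by rintro rfl; omega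
    obtain ⟨v, hve, hvf⟩ := (exists_mem_mem_iff_of_mem_eFin (hμ he) (hμ hf)).2 (by omega)
    exact hdisj e he f hf hne v hve hvf
  · intro hsparse e he f hf hne v hve hvf
    have hidx := (exists_mem_mem_iff_of_mem_eFin (hμ he) (hμ hf)).1 ⟨v, hve, hvf⟩
    have hidx_ne : edgeIndex e ≠ edgeIndex f := fun h => hne (edgeIndex_injOn (hμ he) (hμ hf) h)
    rcases hidx with h | h | h
    · exact hidx_ne h
    · exact hsparse _ (mem_image_of_mem _ he) (h ▸ mem_image_of_mem _ hf)
    · exact hsparse _ (mem_image_of_mem _ hf) (h ▸ mem_image_of_mem _ he)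

lemma sum_matchings_pathG {M : Type*} [AddCommMonoid M] (F : Finset ℕ → M) :
    ∑ μ ∈ matchings (pathG n), F (μ.image edgeIndex) = ∑ S ∈ sparseSets (n - 1), F S := by
  refine sum_nbij' (·.image edgeIndex) (fun S => {e ∈ eFin (pathG n) | edgeIndex e ∈ S})
    (fun μ hμ => ?_) (fun S hS => ?_) (fun μ hμ => ?_) (fun S hS => ?_) (fun _ _ => rfl)
  · obtain ⟨hsub, hsparse⟩ := mem_matchings_pathG.1 hμ
    exact mem_sparseSets.2 ⟨image_edgeIndex_subset hsub, hsparse⟩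
  · obtain ⟨hS, hsparse⟩ := mem_sparseSets.1 hS
    exact mem_matchings_pathG.2 ⟨filter_subset _ _, by rwa [image_edgeIndex_filter hS]⟩
  · exact filter_edgeIndex_mem_image (mem_matchings_pathG.1 hμ).1
  · exact image_edgeIndex_filter (mem_sparseSets.1 hS).1

lemma Upoly_eq_sum_sparseSets {S : Type*} [CommSemiring S] (m : ℕ) (Y Z : S) :
    Upoly m Y Z = ∑ T ∈ sparseSets (m - 1), Y ^ #T * Z ^ (m - 1 - #T) := by
  rw [Upoly, ← sum_matchings_pathG fun T => Y ^ #T * Z ^ (m - 1 - #T)]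
  refine sum_congr rfl fun μ hμ => ?_
  rw [card_image_edgeIndex (mem_matchings_pathG.1 hμ).1]

end PathEdges

section PathReversal

variable {n : ℕ}

lemma map_revPerm_mem_eFin {e : Sym2 (Fin n)} (he : e ∈ eFin (pathG n)) :
    e.map Fin.revPerm ∈ eFin (pathG n) := by
  obtain ⟨u, v, huv, rfl⟩ := mem_eFin_pathG.1 he
  rw [eFin, SimpleGraph.mem_edgeFinset, Sym2.map_mk, SimpleGraph.mem_edgeSet,
    mem_autF_iff.1 revPerm_mem_autF]
  exact pathG_adj.2 (Or.inl huv)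

lemma edgeIndex_map_revPerm {e : Sym2 (Fin n)} (he : e ∈ eFin (pathG n)) :
    edgeIndex (e.map Fin.revPerm) = n - 2 - edgeIndex e := by
  obtain ⟨u, v, huv, rfl⟩ := mem_eFin_pathG.1 he
  simp only [Sym2.map_mk, edgeIndex_mk, Fin.revPerm_apply, Fin.val_rev]
  omega

lemma edgePerm_revPerm_eq_self_iff {e : Sym2 (Fin n)} (he : e ∈ eFin (pathG n)) :
    edgePerm Fin.revPerm e = e ↔ 2 * edgeIndex e + 2 = n := by
  have hlt : edgeIndex e < n - 1 := mem_range.1 (image_edgeIndex_eFin ▸ mem_image_of_mem _ he)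
  rw [edgePerm_apply, ← (edgeIndex_injOn.eq_iff (map_revPerm_mem_eFin he) he),
    edgeIndex_map_revPerm he]
  omega

lemma image_map_revPerm_eq_self_iff {μ : Finset (Sym2 (Fin n))} (hμ : μ ⊆ eFin (pathG n)) :
    μ.image (Sym2.map Fin.revPerm) = μ ↔
      mirror (n - 2) (μ.image edgeIndex) = μ.image edgeIndex := by
  have hmap : (μ.image (Sym2.map Fin.revPerm)).image edgeIndex =
      mirror (n - 2) (μ.image edgeIndex) := by
    rw [mirror, image_image, image_image]
    exact image_congr fun e he => edgeIndex_map_revPerm (hμ he)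
  have hsub : μ.image (Sym2.map Fin.revPerm) ⊆ eFin (pathG n) :=
    image_subset_iff.2 fun e he => map_revPerm_mem_eFin (hμ he)
  refine ⟨fun h => by rw [← hmap, h], fun h => ?_⟩
  calc μ.image (Sym2.map Fin.revPerm)
      _ = {e ∈ eFin (pathG n) | edgeIndex e ∈ (μ.image (Sym2.map Fin.revPerm)).image edgeIndex} :=
        (filter_edgeIndex_mem_image hsub).symm
      _ = μ := by rw [hmap, h, filter_edgeIndex_mem_image hμ]

lemma sum_fixedMatchings_revPerm {M : Type*} [AddCommMonoid M] (F : Finset ℕ → M) :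
    ∑ μ ∈ fixedMatchings (pathG n) Fin.revPerm, F (μ.image edgeIndex) =
      ∑ S ∈ sparseSets (n - 1) with mirror (n - 2) S = S, F S := by
  rw [fixedMatchings, sum_filter, sum_filter,
    ← sum_matchings_pathG fun S => if mirror (n - 2) S = S then F S else 0]
  refine sum_congr rfl fun μ hμ => ?_
  have hiff := image_map_revPerm_eq_self_iff (mem_matchings_pathG.1 hμ).1
  -- `convert` bridges the classical `DecidableEq` instance used in `fixedMatchings`
  by_cases hsym : mirror (n - 2) (μ.image edgeIndex) = μ.image edgeIndex
  · rw [if_pos hsym, if_pos (by convert hiff.2 hsym)]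
  · rw [if_neg hsym, if_neg fun h => hsym (hiff.1 (by convert h))]

end PathReversal

section PathWeights

variable {n c : ℕ}

lemma edgeIndex_mem_image_iff {μ : Finset (Sym2 (Fin n))} (hμ : μ ⊆ eFin (pathG n))
    {e : Sym2 (Fin n)} (he : e ∈ eFin (pathG n)) : edgeIndex e ∈ μ.image edgeIndex ↔ e ∈ μ := by
  conv_rhs => rw [← filter_edgeIndex_mem_image hμ]
  simp [he]

-- The instance is implicit so that it unifies with the classical one occurring in `wM`.
lemma card_filter_eFin_pathG {p : Sym2 (Fin n) → Prop} {_ : DecidablePred p} (q : ℕ → Prop)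
    [DecidablePred q] (hpq : ∀ e ∈ eFin (pathG n), p e ↔ q (edgeIndex e)) :
    #{e ∈ eFin (pathG n) | p e} = #{i ∈ range (n - 1) | q i} := by
  rw [filter_congr hpq, ← image_edgeIndex_eFin, filter_image,
    card_image_of_injOn (edgeIndex_injOn.mono (filter_subset _ _))]

lemma filter_range_mem_and {N : ℕ} {S : Finset ℕ} (hS : S ⊆ range N) (p : ℕ → Prop)
    [DecidablePred p] : {i ∈ range N | i ∈ S ∧ p i} = {i ∈ S | p i} := by
  ext i
  simp only [mem_filter]
  exact ⟨fun h => h.2, fun h => ⟨hS h.1, h⟩⟩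

lemma filter_range_not_mem_and {N : ℕ} {S : Finset ℕ} (p : ℕ → Prop) [DecidablePred p] :
    {i ∈ range N | i ∉ S ∧ p i} = {i ∈ range N \ S | p i} := by
  ext i
  simp only [mem_filter, mem_sdiff, and_assoc]

lemma wM_pathG_revPerm_eq_counts {μ : Finset (Sym2 (Fin (2 * c + 2)))}
    (hμ : μ ⊆ eFin (pathG (2 * c + 2))) :
    wM (pathG (2 * c + 2)) μ Fin.revPerm = va 2 ^ (c + 1) *
      vb 2 ^ (#((μ.image edgeIndex).erase c) / 2) *
      vc 1 ^ #{i ∈ μ.image edgeIndex | i = c} *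
      vbeta 2 ^ (#((range (2 * c + 1) \ μ.image edgeIndex).erase c) / 2) *
      vgamma 1 ^ #{i ∈ range (2 * c + 1) \ μ.image edgeIndex | i = c} := by
  set S := μ.image edgeIndex
  have hS : S ⊆ range (2 * c + 1) := image_edgeIndex_subset hμ
  have hinv : Function.Involutive (Fin.revPerm : Equiv.Perm (Fin (2 * c + 2))) := Fin.rev_rev
  have hfree (v : Fin (2 * c + 2)) : Fin.revPerm v ≠ v := fun h => by
    have := congrArg Fin.val h
    rw [Fin.revPerm_apply, Fin.val_rev] at this
    omega
  have hmem (e) (he : e ∈ eFin (pathG (2 * c + 2))) := (edgeIndex_mem_image_iff hμ he).symm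
  have hfix (e) (he : e ∈ eFin (pathG (2 * c + 2))) :
      edgePerm Fin.revPerm e = e ↔ edgeIndex e = c := by
    rw [edgePerm_revPerm_eq_self_iff he]
    omega
  rw [wM_of_fixedPointFree hinv hfree, Fintype.card_fin, show (2 * c + 2) / 2 = c + 1 by omega,
    card_filter_eFin_pathG (fun i => i ∈ S ∧ i ≠ c) fun e he =>
      and_congr (hmem e he) (hfix e he).not,
    card_filter_eFin_pathG (fun i => i ∈ S ∧ i = c) fun e he => and_congr (hmem e he) (hfix e he),
    card_filter_eFin_pathG (fun i => i ∉ S ∧ i ≠ c) fun e he =>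
      and_congr (hmem e he).not (hfix e he).not,
    card_filter_eFin_pathG (fun i => i ∉ S ∧ i = c) fun e he =>
      and_congr (hmem e he).not (hfix e he),
    show 2 * c + 2 - 1 = 2 * c + 1 from rfl, filter_range_mem_and hS, filter_range_mem_and hS,
    filter_range_not_mem_and,
    filter_range_not_mem_and, filter_ne', filter_ne']

lemma wM_pathG_revPerm {μ : Finset (Sym2 (Fin (2 * c + 2)))}
    (hμ : μ ⊆ eFin (pathG (2 * c + 2))) :
    wM (pathG (2 * c + 2)) μ Fin.revPerm = va 2 ^ (c + 1) *
      if c ∈ μ.image edgeIndex then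
        vc 1 * (vb 2 ^ ((#μ - 1) / 2) * vbeta 2 ^ ((2 * c + 1 - #μ) / 2))
      else vgamma 1 * (vb 2 ^ (#μ / 2) * vbeta 2 ^ ((2 * c - #μ) / 2)) := by
  set S := μ.image edgeIndex
  have hS : S ⊆ range (2 * c + 1) := image_edgeIndex_subset hμ
  have hnot : c ∈ range (2 * c + 1) \ S ↔ c ∉ S := by
    rw [mem_sdiff, mem_range]
    exact and_iff_right (by omega)
  rw [wM_pathG_revPerm_eq_counts hμ, filter_eq', filter_eq', ← card_image_edgeIndex hμ]
  by_cases hcS : c ∈ S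
  · rw [if_pos hcS, if_neg (hnot.not_left.2 hcS), if_pos hcS,
      erase_eq_of_notMem (hnot.not_left.2 hcS), card_erase_of_mem hcS,
      card_sdiff_of_subset hS, card_singleton, card_empty, card_range]
    simp only [pow_one, pow_zero, mul_one]
    ring
  · rw [if_neg hcS, if_pos (hnot.2 hcS), if_neg hcS, erase_eq_of_notMem hcS,
      card_erase_of_mem (hnot.2 hcS), card_sdiff_of_subset hS, card_singleton, card_empty,
      card_range, show 2 * c + 1 - #S - 1 = 2 * c - #S by omega]
    simp only [pow_one, pow_zero, mul_one]
    ring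

end PathWeights

lemma fixedMatchings_one {V : Type*} [Fintype V] (G : SimpleGraph V) :
    fixedMatchings G 1 = matchings G :=
  filter_true_of_mem fun μ _ => by simp

lemma fixedMatchings_subset {V : Type*} [Fintype V] (G : SimpleGraph V) (σ : Equiv.Perm V) :
    fixedMatchings G σ ⊆ matchings G :=
  filter_subset _ _

lemma sum_fixedMatchings_pathG_one (n : ℕ) :
    ∑ μ ∈ fixedMatchings (pathG n) 1, wM (pathG n) μ 1 = va 1 ^ n * Upoly n (vb 1) (vbeta 1) := by
  rw [fixedMatchings_one, Upoly, mul_sum]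
  refine sum_congr rfl fun μ hμ => ?_
  rw [wM_one (mem_matchings_pathG.1 hμ).1, Fintype.card_fin, card_eFin_pathG, mul_assoc]

lemma sum_fixedMatchings_pathG_revPerm {c : ℕ} (hc : 1 ≤ c) :
    ∑ μ ∈ fixedMatchings (pathG (2 * c + 2)) Fin.revPerm, wM (pathG (2 * c + 2)) μ Fin.revPerm =
      va 2 ^ (c + 1) * (vgamma 1 * Upoly (c + 1) (vb 2) (vbeta 2) +
        vc 1 * vbeta 2 * Upoly c (vb 2) (vbeta 2)) := by
  set A : ℕ → WRing := fun t => vc 1 * (vb 2 ^ ((t - 1) / 2) * vbeta 2 ^ ((2 * c + 1 - t) / 2))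
  set B : ℕ → WRing := fun t => vgamma 1 * (vb 2 ^ (t / 2) * vbeta 2 ^ ((2 * c - t) / 2))
  set W : Finset ℕ → WRing := fun S => va 2 ^ (c + 1) * if c ∈ S then A #S else B #S
  have hweight : ∀ μ ∈ fixedMatchings (pathG (2 * c + 2)) Fin.revPerm,
      wM (pathG (2 * c + 2)) μ Fin.revPerm = W (μ.image edgeIndex) := fun μ hμ => by
    have hsub := (mem_matchings_pathG.1 (fixedMatchings_subset _ _ hμ)).1
    simp only [wM_pathG_revPerm hsub, card_image_edgeIndex hsub, W, A, B]
  rw [sum_congr rfl hweight, sum_fixedMatchings_revPerm W]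
  simp only [W]
  rw [← mul_sum,
    show 2 * c + 2 - 1 = 2 * c + 1 from rfl, show 2 * c + 2 - 2 = 2 * c by omega,
    ← sum_filter_add_sum_filter_not _ (c ∈ ·), filter_filter, filter_filter,
    sum_congr rfl fun S hS => if_pos (mem_filter.1 hS).2.2,
    sum_congr rfl fun S hS => if_neg (mem_filter.1 hS).2.2,
    sum_sparseSets_mirror_center_mem, sum_sparseSets_mirror_center_not_mem,
    Upoly_eq_sum_sparseSets, Upoly_eq_sum_sparseSets, Nat.add_sub_cancel, mul_sum, mul_sum,
    add_comm (∑ T ∈ sparseSets (c - 1), _)]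
  congr 2
  · refine sum_congr rfl fun T hT => ?_
    have hcard : #T ≤ c := by simpa using card_le_card (mem_sparseSets.1 hT).1
    dsimp only [B]
    rw [show 2 * #T / 2 = #T by omega, show (2 * c - 2 * #T) / 2 = c - #T by omega]
  · refine sum_congr rfl fun T hT => ?_
    have hcard : #T ≤ c - 1 := by simpa using card_le_card (mem_sparseSets.1 hT).1
    dsimp only [A]
    rw [show (2 * #T + 1 - 1) / 2 = #T by omega,
      show (2 * c + 1 - (2 * #T + 1)) / 2 = (c - 1 - #T) + 1 by omega]
    ring

/-- the extended Walsh series of matched paths `P_n`, `n` even, `n ≥ 4`. -/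
theorem walsh_matched_path_even (n : ℕ) (hn : 4 ≤ n) (heven : Even n) :
    ∑ σ ∈ autF (pathG n), ∑ μ ∈ fixedMatchings (pathG n) σ, wM (pathG n) μ σ =
      va 1 ^ n * Upoly n (vb 1) (vbeta 1) +
        va 2 ^ (n / 2) *
          (vgamma 1 * Upoly (n / 2) (vb 2) (vbeta 2) +
            vc 1 * vbeta 2 * Upoly ((n - 2) / 2) (vb 2) (vbeta 2)) := by
  obtain ⟨c, rfl⟩ : ∃ c, n = 2 * c + 2 := ⟨n / 2 - 1, by obtain ⟨k, rfl⟩ := heven; omega⟩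
  have hne : (1 : Equiv.Perm (Fin (2 * c + 2))) ≠ Fin.revPerm := fun h => by
    simpa [Fin.ext_iff, Fin.val_rev] using congrArg (fun σ : Equiv.Perm _ => σ 0) h
  rw [autF_pathG (by omega), sum_pair hne, sum_fixedMatchings_pathG_one,
    sum_fixedMatchings_pathG_revPerm (by omega), show (2 * c + 2) / 2 = c + 1 by omega,
    show (2 * c + 2 - 2) / 2 = c by omega]
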